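/- Let p ≥ 2 and s ≥ 1 be integers and let (d,r) be an arithmetical structure on CT(p,s). Suppose d_i = 1 for some 2 ≤ i ≤ p−1. Then the pair (d′,r′) obtained by smoothing at the degree-2 vertex v_i — namely r′_j = r_j for j ∈ {1,…,i−1} and for all leaves, r′_j = r_{j+1} for j ∈ {i,…,p−1}; d′_j = d_j for j ∈ {1,…,i−2} and for all leaves, d′_{i−1} = d_{i−1} − 1, d′_i = d_{i+1} − 1, and d′_j = d_{j+1} for j ∈ {i+1,…,p−1} — is a valid arithmetical structure on CT(p−1,s). -/

import Mathlib

/-!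
Since `d_i = 1`, the balance equation at `v_i` reads `r_i = r_{i-1} + r_{i+1}`. Removing `v_i`
and joining `v_{i-1}` to `v_{i+1}` replaces `r_i` by `r_{i+1}` in the neighbour sum of `v_{i-1}`
and by `r_{i-1}` in that of `v_{i+1}`, i.e. lowers each by the vertex's own `r`-value, so
lowering `d_{i-1}` and `d_{i+1}` by one restores the balance equations. These labels stay
positive because a neighbour with `d = 1` would have `r`-value at least `r_i`. The gcd does not
change since `r_i` is the sum of two values that are kept.
-/


/-- The conditions defining an arithmetical structure on the coconut tree `CT(p,s)`:
the path vertices are `v_1, …, v_p` with labels `d i`, `r i` for `1 ≤ i ≤ p`, the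
leaves are `ℓ_1, …, ℓ_s` with labels `dl j`, `rl j` for `1 ≤ j ≤ s`; `v_i` is adjacent
to `v_{i+1}` for `1 ≤ i ≤ p - 1` and every leaf is adjacent to `v_p`.  All labels are
positive, at every vertex `d_v * r_v` equals the sum of the `r`-values of its
neighbors, and the gcd of all the `r`-values is `1`. -/
def IsCTArith (p s : ℕ) (d r dl rl : ℕ → ℕ) : Prop :=
  (∀ i, 1 ≤ i → i ≤ p → 0 < d i) ∧
  (∀ i, 1 ≤ i → i ≤ p → 0 < r i) ∧
  (∀ j, 1 ≤ j → j ≤ s → 0 < dl j) ∧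
  (∀ j, 1 ≤ j → j ≤ s → 0 < rl j) ∧
  (∀ i, 1 ≤ i → i ≤ p → d i * r i =
      (if 2 ≤ i then r (i - 1) else 0) +
      (if i < p then r (i + 1) else 0) +
      (if i = p then ∑ j ∈ Finset.Icc 1 s, rl j else 0)) ∧
  (∀ j, 1 ≤ j → j ≤ s → dl j * rl j = r p) ∧
  Nat.gcd ((Finset.Icc 1 p).gcd r) ((Finset.Icc 1 s).gcd rl) = 1

/-- An arithmetical structure on `CT(p,s)` is smooth if `d_i ≥ 2` for all
`1 ≤ i ≤ p - 1` and `d_{ℓ_j} ≥ 2` for all `1 ≤ j ≤ s`. -/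
def IsCTSmooth (p s : ℕ) (d dl : ℕ → ℕ) : Prop :=
  (∀ i, 1 ≤ i → i ≤ p - 1 → 2 ≤ d i) ∧ (∀ j, 1 ≤ j → j ≤ s → 2 ≤ dl j)

def ctNbrSum (p s : ℕ) (r rl : ℕ → ℕ) (j : ℕ) : ℕ :=
  (if 2 ≤ j then r (j - 1) else 0) + (if j < p then r (j + 1) else 0) +
    (if j = p then ∑ k ∈ Finset.Icc 1 s, rl k else 0)

def ctSmoothD (i : ℕ) (d : ℕ → ℕ) : ℕ → ℕ := fun j =>
  if j ≤ i - 2 then d j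
  else if j = i - 1 then d (i - 1) - 1
  else if j = i then d (i + 1) - 1
  else d (j + 1)

def ctSmoothR (i : ℕ) (r : ℕ → ℕ) : ℕ → ℕ := fun j =>
  if j ≤ i - 1 then r j else r (j + 1)

section Smoothing

variable {i j : ℕ} {d r : ℕ → ℕ}

theorem ctSmoothD_of_lt (hj : j + 1 < i) : ctSmoothD i d j = d j := by
  simp only [ctSmoothD, if_pos (show j ≤ i - 2 by omega)]

theorem ctSmoothD_pred (hi : 2 ≤ i) : ctSmoothD i d (i - 1) = d (i - 1) - 1 := by
  simp only [ctSmoothD, if_neg (show ¬ i - 1 ≤ i - 2 by omega), if_true]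

theorem ctSmoothD_self (hi : 2 ≤ i) : ctSmoothD i d i = d (i + 1) - 1 := by
  simp only [ctSmoothD, if_neg (show ¬ i ≤ i - 2 by omega), if_neg (show i ≠ i - 1 by omega),
    if_true]

theorem ctSmoothD_of_gt (hj : i < j) : ctSmoothD i d j = d (j + 1) := by
  simp only [ctSmoothD, if_neg (show ¬ j ≤ i - 2 by omega), if_neg (show j ≠ i - 1 by omega),
    if_neg hj.ne']

theorem ctSmoothR_of_lt (hj : j < i) : ctSmoothR i r j = r j := if_pos (by omega)

theorem ctSmoothR_of_le (hj : i ≤ j) (hi : 1 ≤ i) : ctSmoothR i r j = r (j + 1) :=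
  if_neg (by omega)

variable {p s : ℕ} {rl : ℕ → ℕ}

theorem ctNbrSum_ctSmoothR_of_lt (hip : i < p) (hj : j + 1 < i) :
    ctNbrSum (p - 1) s (ctSmoothR i r) rl j = ctNbrSum p s r rl j := by
  simp only [ctNbrSum, ctSmoothR]
  split_ifs <;> omega

theorem ctNbrSum_ctSmoothR_pred (hi : 2 ≤ i) (hip : i < p) :
    ctNbrSum (p - 1) s (ctSmoothR i r) rl (i - 1) + r i =
      ctNbrSum p s r rl (i - 1) + r (i + 1) := by
  simp only [ctNbrSum, ctSmoothR, Nat.sub_add_cancel (show 1 ≤ i by omega)]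
  split_ifs <;> omega

theorem ctNbrSum_ctSmoothR_self (hi : 2 ≤ i) (hip : i < p) :
    ctNbrSum (p - 1) s (ctSmoothR i r) rl i + r i = ctNbrSum p s r rl (i + 1) + r (i - 1) := by
  simp only [ctNbrSum, ctSmoothR, Nat.add_sub_cancel]
  split_ifs <;> omega

theorem ctNbrSum_ctSmoothR_of_gt (hi : 1 ≤ i) (hj : i < j) (hjp : j ≤ p - 1) :
    ctNbrSum (p - 1) s (ctSmoothR i r) rl j = ctNbrSum p s r rl (j + 1) := by
  simp only [ctNbrSum, ctSmoothR, Nat.add_sub_cancel, Nat.sub_add_cancel (show 1 ≤ j by omega)]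
  split_ifs <;> omega

theorem gcd_ctSmoothR_dvd (hi : 2 ≤ i) (hip : i < p) (hri : r i = r (i - 1) + r (i + 1)) :
    (Finset.Icc 1 (p - 1)).gcd (ctSmoothR i r) ∣ (Finset.Icc 1 p).gcd r := by
  have hdvd : ∀ j, 1 ≤ j → j ≤ p - 1 →
      (Finset.Icc 1 (p - 1)).gcd (ctSmoothR i r) ∣ ctSmoothR i r j :=
    fun j hj1 hjp => Finset.gcd_dvd (Finset.mem_Icc.2 ⟨hj1, hjp⟩)
  refine Finset.dvd_gcd fun j hj => ?_
  obtain ⟨hj1, hjp⟩ := Finset.mem_Icc.1 hj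
  rcases lt_trichotomy j i with hj | rfl | hj
  · simpa only [ctSmoothR_of_lt hj] using hdvd j hj1 (by omega)
  · have hpred := hdvd (j - 1) (by omega) (by omega)
    have hsucc := hdvd j hj1 (by omega)
    rw [ctSmoothR_of_lt (by omega)] at hpred
    rw [ctSmoothR_of_le le_rfl (by omega)] at hsucc
    exact hri ▸ dvd_add hpred hsucc
  · have := hdvd (j - 1) (by omega) (by omega)
    rwa [ctSmoothR_of_le (by omega) (by omega), Nat.sub_add_cancel (by omega)] at this

end Smoothing

namespace IsCTArith

variable {p s i : ℕ} {d r dl rl : ℕ → ℕ}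

theorem d_pos (h : IsCTArith p s d r dl rl) {j : ℕ} (hj1 : 1 ≤ j) (hjp : j ≤ p) : 0 < d j :=
  h.1 j hj1 hjp

theorem r_pos (h : IsCTArith p s d r dl rl) {j : ℕ} (hj1 : 1 ≤ j) (hjp : j ≤ p) : 0 < r j :=
  h.2.1 j hj1 hjp

theorem balance (h : IsCTArith p s d r dl rl) {j : ℕ} (hj1 : 1 ≤ j) (hjp : j ≤ p) :
    d j * r j = ctNbrSum p s r rl j :=
  h.2.2.2.2.1 j hj1 hjp

theorem r_succ_le (h : IsCTArith p s d r dl rl) {j : ℕ} (hj1 : 1 ≤ j) (hjp : j < p) :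
    r (j + 1) ≤ d j * r j := by
  rw [h.balance hj1 hjp.le, ctNbrSum, if_pos hjp]
  omega

theorem r_pred_le (h : IsCTArith p s d r dl rl) {j : ℕ} (hj : 2 ≤ j) (hjp : j ≤ p) :
    r (j - 1) ≤ d j * r j := by
  rw [h.balance (by omega) hjp, ctNbrSum, if_pos hj]
  omega

theorem r_eq_add_of_d_eq_one (h : IsCTArith p s d r dl rl) (hi : 2 ≤ i) (hip : i < p)
    (hdi : d i = 1) : r i = r (i - 1) + r (i + 1) := by
  have := h.balance (by omega) hip.le
  rwa [hdi, one_mul, ctNbrSum, if_pos hi, if_pos hip, if_neg hip.ne, add_zero] at this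

theorem two_le_d_pred_of_d_eq_one (h : IsCTArith p s d r dl rl) (hi : 2 ≤ i) (hip : i < p)
    (hdi : d i = 1) : 2 ≤ d (i - 1) := by
  have hri := h.r_eq_add_of_d_eq_one hi hip hdi
  have hle := h.r_succ_le (j := i - 1) (by omega) (by omega)
  rw [Nat.sub_add_cancel (by omega)] at hle
  have hpos := h.r_pos (j := i + 1) (by omega) hip
  exact Nat.lt_of_mul_lt_mul_right (show 1 * r (i - 1) < d (i - 1) * r (i - 1) by omega)

theorem two_le_d_succ_of_d_eq_one (h : IsCTArith p s d r dl rl) (hi : 2 ≤ i) (hip : i < p)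
    (hdi : d i = 1) : 2 ≤ d (i + 1) := by
  have hri := h.r_eq_add_of_d_eq_one hi hip hdi
  have hle := h.r_pred_le (j := i + 1) (by omega) hip
  rw [Nat.add_sub_cancel] at hle
  have hpos := h.r_pos (j := i - 1) (by omega) (by omega)
  exact Nat.lt_of_mul_lt_mul_right (show 1 * r (i + 1) < d (i + 1) * r (i + 1) by omega)

theorem ctSmoothD_pos (h : IsCTArith p s d r dl rl) (hi : 2 ≤ i) (hip : i < p) (hdi : d i = 1)
    {j : ℕ} (hj1 : 1 ≤ j) (hjp : j ≤ p - 1) : 0 < ctSmoothD i d j := by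
  rcases (by omega : j + 1 < i ∨ j + 1 = i ∨ j = i ∨ i < j) with hj | hj | rfl | hj
  · rw [ctSmoothD_of_lt hj]
    exact h.d_pos hj1 (by omega)
  · obtain rfl : j = i - 1 := by omega
    have := h.two_le_d_pred_of_d_eq_one hi hip hdi
    rw [ctSmoothD_pred hi]
    omega
  · have := h.two_le_d_succ_of_d_eq_one hi hip hdi
    rw [ctSmoothD_self hi]
    omega
  · rw [ctSmoothD_of_gt hj]
    exact h.d_pos (by omega) (by omega)

theorem balance_ctSmooth (h : IsCTArith p s d r dl rl) (hi : 2 ≤ i) (hip : i < p)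
    (hdi : d i = 1) {j : ℕ} (hj1 : 1 ≤ j) (hjp : j ≤ p - 1) :
    ctSmoothD i d j * ctSmoothR i r j = ctNbrSum (p - 1) s (ctSmoothR i r) rl j := by
  have hri := h.r_eq_add_of_d_eq_one hi hip hdi
  rcases (by omega : j + 1 < i ∨ j + 1 = i ∨ j = i ∨ i < j) with hj | hj | rfl | hj
  · rw [ctSmoothD_of_lt hj, ctSmoothR_of_lt (by omega), ctNbrSum_ctSmoothR_of_lt hip hj]
    exact h.balance hj1 (by omega)
  · obtain rfl : j = i - 1 := by omega
    have hb := h.balance hj1 (by omega)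
    have hn := ctNbrSum_ctSmoothR_pred (s := s) (rl := rl) (r := r) hi hip
    rw [ctSmoothD_pred hi, ctSmoothR_of_lt (by omega), Nat.sub_one_mul]
    omega
  · have hb := h.balance (j := j + 1) (by omega) hip
    have hn := ctNbrSum_ctSmoothR_self (s := s) (rl := rl) (r := r) hi hip
    rw [ctSmoothD_self hi, ctSmoothR_of_le le_rfl (by omega), Nat.sub_one_mul]
    omega
  · rw [ctSmoothD_of_gt hj, ctSmoothR_of_le hj.le (by omega),
      ctNbrSum_ctSmoothR_of_gt (by omega) hj hjp]
    exact h.balance (by omega) (by omega)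

theorem ctSmooth (h : IsCTArith p s d r dl rl) (hi : 2 ≤ i) (hip : i < p) (hdi : d i = 1) :
    IsCTArith (p - 1) s (ctSmoothD i d) (ctSmoothR i r) dl rl := by
  obtain ⟨-, -, hdl, hrl, -, hleaf, hgcd⟩ := id h
  refine ⟨fun j hj1 hjp => h.ctSmoothD_pos hi hip hdi hj1 hjp, fun j hj1 hjp => ?_, hdl, hrl,
    fun j hj1 hjp => h.balance_ctSmooth hi hip hdi hj1 hjp, fun j hj1 hjs => ?_, ?_⟩
  · unfold ctSmoothR
    split_ifs
    exacts [h.r_pos hj1 (by omega), h.r_pos (by omega) (by omega)]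
  · rw [ctSmoothR_of_le (by omega) (by omega), Nat.sub_add_cancel (by omega)]
    exact hleaf j hj1 hjs
  · have hdvd := gcd_ctSmoothR_dvd hi hip (h.r_eq_add_of_d_eq_one hi hip hdi)
    have := Nat.gcd_dvd_gcd_of_dvd_left ((Finset.Icc 1 s).gcd rl) hdvd
    rwa [hgcd, Nat.dvd_one] at this

end IsCTArith

theorem ct_smoothing_inner_vertex_general (p s i : ℕ)
    (d r dl rl : ℕ → ℕ) (h : IsCTArith p s d r dl rl)
    (hi2 : 2 ≤ i) (hip : i ≤ p - 1) (hdi : d i = 1) :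
    IsCTArith (p - 1) s
      (fun j => if j ≤ i - 2 then d j
                else if j = i - 1 then d (i - 1) - 1
                else if j = i then d (i + 1) - 1
                else d (j + 1))
      (fun j => if j ≤ i - 1 then r j else r (j + 1))
      dl rl :=
  h.ctSmooth hi2 (by omega) hdi

/-- Smoothing an arithmetical structure on `CT(p,s)` at a degree-2
path vertex `v_i` (with `2 ≤ i ≤ p-1` and `d_i = 1`) yields a valid arithmetical
structure on `CT(p-1,s)`:
`r'_j = r_j` for `j ≤ i-1` and for all leaves, `r'_j = r_{j+1}` for `i ≤ j ≤ p-1`;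
`d'_j = d_j` for `j ≤ i-2` and for all leaves, `d'_{i-1} = d_{i-1} - 1`,
`d'_i = d_{i+1} - 1`, and `d'_j = d_{j+1}` for `i+1 ≤ j ≤ p-1`. -/
theorem ct_smoothing_inner_vertex (p s i : ℕ) (hp : 2 ≤ p) (hs : 1 ≤ s)
    (d r dl rl : ℕ → ℕ) (h : IsCTArith p s d r dl rl)
    (hi2 : 2 ≤ i) (hip : i ≤ p - 1) (hdi : d i = 1) :
    IsCTArith (p - 1) s
      (fun j => if j ≤ i - 2 then d j
                else if j = i - 1 then d (i - 1) - 1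
                else if j = i then d (i + 1) - 1
                else d (j + 1))
      (fun j => if j ≤ i - 1 then r j else r (j + 1))
      dl rl :=
  ct_smoothing_inner_vertex_general p s i d r dl rl h hi2 hip hdi
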